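/- arXiv:2008.01757 — 2 statements merged into one kernel-verified Lean document; each statement's English description precedes it below -/
import Mathlib

section
/- Let R be a commutative ring, t ∈ R, and let R_t denote the localization of R away from t. For every R-module M, the assignment f ↦ (f(t^{-n}))_{n≥0} is an R-module isomorphism from Hom_R(R_t, M) onto the R-submodule of ∏_{n∈ℕ} M consisting of all sequences (m_n)_{n∈ℕ} satisfying t • m_{n+1} = m_n for all n. -/
/-!
On the module `C` of sequences with `t • m (n + 1) = m n`, the element `t` acts invertibly (the
inverse is the shift), so the universal property of the localization extends
`r ↦ r • m : R → C` to `R_t → C`; composing with the zeroth coordinate gives the preimage of `m`.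
Injectivity holds because every element of `R_t` has the form `r • t⁻ⁿ`.
-/

open IsLocalization.Away

section CompatibleSeqs

variable {R : Type*} [CommSemiring R] (t : R) (M : Type*) [AddCommMonoid M] [Module R M]

def compatibleSeqs : Submodule R (ℕ → M) where
  carrier := {m | ∀ n, t • m (n + 1) = m n}
  add_mem' hm hm' n := by simp [hm n, hm' n]
  zero_mem' n := by simp
  smul_mem' c m hm n := by simp [smul_comm t c, hm n]

variable {t M}

theorem mem_compatibleSeqs {m : ℕ → M} : m ∈ compatibleSeqs t M ↔ ∀ n, t • m (n + 1) = m n :=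
  Iff.rfl

namespace compatibleSeqs

theorem pow_smul_apply_add (m : compatibleSeqs t M) (k n : ℕ) :
    t ^ k • (m : ℕ → M) (n + k) = (m : ℕ → M) n := by
  induction k with
  | zero => simp
  | succ k ih => rw [pow_succ, mul_smul, ← add_assoc, m.2 (n + k), ih]

variable (t M) in
def shift : compatibleSeqs t M →ₗ[R] compatibleSeqs t M where
  toFun m := ⟨fun n ↦ (m : ℕ → M) (n + 1), fun n ↦ m.2 (n + 1)⟩
  map_add' _ _ := rfl
  map_smul' _ _ := rfl

theorem smul_shift (m : compatibleSeqs t M) : t • shift t M m = m :=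
  Subtype.ext <| funext m.2

theorem isUnit_algebraMap_end_of_mem_powers {s : R} (hs : s ∈ Submonoid.powers t) :
    IsUnit (algebraMap R (Module.End R (compatibleSeqs t M)) s) := by
  obtain ⟨k, rfl⟩ := hs
  have ht : IsUnit (algebraMap R (Module.End R (compatibleSeqs t M)) t) :=
    isUnit_iff_exists.2 ⟨shift t M, LinearMap.ext smul_shift, LinearMap.ext smul_shift⟩
  simpa only [map_pow] using ht.pow k

end compatibleSeqs

end CompatibleSeqs

section Localization

variable {R : Type*} [CommSemiring R] (t : R) {A : Type*} [CommSemiring A] [Algebra R A]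
  [IsLocalization.Away t A] {M : Type*} [AddCommMonoid M] [Module R M]

theorem exists_eq_smul_invSelf_pow (x : A) : ∃ (r : R) (n : ℕ), x = r • invSelf t ^ n := by
  obtain ⟨n, r, h⟩ := surj t x
  refine ⟨r, n, ?_⟩
  rw [Algebra.smul_def, ← h, mul_assoc, ← mul_pow, mul_invSelf, one_pow, mul_one]

theorem linearMap_ext_invSelf_pow {f g : A →ₗ[R] M}
    (h : ∀ n : ℕ, f (invSelf t ^ n) = g (invSelf t ^ n)) : f = g := by
  ext x
  obtain ⟨r, n, rfl⟩ := exists_eq_smul_invSelf_pow t x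
  rw [map_smul, map_smul, h n]

variable (A M)

noncomputable def seqOfHom : (A →ₗ[R] M) →ₗ[R] compatibleSeqs t M where
  toFun f := ⟨fun n ↦ f (invSelf t ^ n), fun n ↦ by
    rw [← map_smul, Algebra.smul_def, pow_succ', ← mul_assoc, mul_invSelf, one_mul]⟩
  map_add' _ _ := rfl
  map_smul' _ _ := rfl

theorem seqOfHom_injective : Function.Injective (seqOfHom t A M) := fun _ _ h ↦
  linearMap_ext_invSelf_pow t fun n ↦ congr_fun (congr_arg Subtype.val h) n

theorem seqOfHom_surjective : Function.Surjective (seqOfHom t A M) := by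
  intro m
  let L : A →ₗ[R] compatibleSeqs t M :=
    IsLocalizedModule.lift (Submonoid.powers t) (Algebra.linearMap R A)
      (LinearMap.toSpanSingleton R _ m)
      fun s ↦ compatibleSeqs.isUnit_algebraMap_end_of_mem_powers s.2
  have hL : ∀ n : ℕ, t ^ n • L (invSelf t ^ n) = m := by
    intro n
    rw [← map_smul, Algebra.smul_def, map_pow, ← mul_pow, mul_invSelf, one_pow,
      ← map_one (algebraMap R A), ← Algebra.linearMap_apply, IsLocalizedModule.lift_apply,
      LinearMap.toSpanSingleton_apply, one_smul]
  refine ⟨LinearMap.proj 0 ∘ₗ (compatibleSeqs t M).subtype ∘ₗ L,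
    Subtype.ext <| funext fun n ↦ ?_⟩
  change (L (invSelf t ^ n) : ℕ → M) 0 = (m : ℕ → M) n
  rw [← hL n, ← compatibleSeqs.pow_smul_apply_add _ n 0, zero_add]
  rfl

noncomputable def homEquivCompatibleSeqs : (A →ₗ[R] M) ≃ₗ[R] compatibleSeqs t M :=
  LinearEquiv.ofBijective (seqOfHom t A M) ⟨seqOfHom_injective t A M, seqOfHom_surjective t A M⟩

end Localization

/-- Let `R` be a commutative ring, `t ∈ R`, and let `R_t` denote the
localization of `R` away from `t`.  For every `R`-module `M`, the assignment
`f ↦ (f(t^{-n}))_{n ≥ 0}` is an `R`-module isomorphism from `Hom_R(R_t, M)` onto the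
`R`-submodule of `∏_{n ∈ ℕ} M` consisting of all sequences `(m_n)_n` with
`t • m_{n+1} = m_n` for all `n`. -/
theorem stmt1 (R : Type*) [CommRing R] (t : R)
    (M : Type*) [AddCommGroup M] [Module R M]
    (S : Submodule R (ℕ → M))
    (hS : ∀ m : ℕ → M, m ∈ S ↔ ∀ n : ℕ, t • m (n + 1) = m n) :
    ∃ e : (Localization.Away t →ₗ[R] M) ≃ₗ[R] S,
      ∀ (f : Localization.Away t →ₗ[R] M) (n : ℕ),
        (e f : ℕ → M) n = f (IsLocalization.Away.invSelf t ^ n) := by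
  have hS_eq : compatibleSeqs t M = S :=
    Submodule.ext fun m ↦ mem_compatibleSeqs.trans (hS m).symm
  exact ⟨(homEquivCompatibleSeqs t (Localization.Away t) M).trans (LinearEquiv.ofEq _ _ hS_eq),
    fun _ _ ↦ rfl⟩
end

section
/- Let C be a field, R a commutative C-algebra, and t ∈ R. If M is an R-module that is finite-dimensional as a C-vector space, then Ext^i_R(R_t, M) = 0 for all i ≥ 1, where R_t denotes the localization of R away from t. -/
/-!
Via `R_t ≅ R[X]/(tX - 1)`, and since `tX - 1` is a non-zero-divisor,
`0 → R[X] --(tX - 1)--> R[X] → R_t → 0` is a free resolution of length one: it is the telescope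
presentation `0 → ⊕ℕ R → ⊕ℕ R → R_t → 0`. So `Ext^i(R_t, M)` vanishes for `i ≥ 2`, and
`Ext^1(R_t, M)` vanishes as soon as every `R`-linear `g : R[X] → M` factors through
multiplication by `tX - 1`. On the basis `X^n` this asks, for every sequence `y` in `M`, for a
solution of `m n = y n + t • m (n + 1)`: the vanishing of `lim¹` of the tower `(M, t•)`.
When `M` is Artinian (e.g. finite-dimensional over `C`), the images `t^k M` stabilise at some
`N` on which `t` is surjective (Mittag-Leffler): there the recursion can be solved forwards,
and the part of `y` outside `N` is absorbed by a finite geometric sum.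
-/

open CategoryTheory Limits ZeroObject Polynomial

universe u

lemma exists_eq_add_apply_succ_of_surjective {M : Type*} [AddCommGroup M] {f : M → M}
    (hf : Function.Surjective f) (y : ℕ → M) : ∃ m : ℕ → M, ∀ n, m n = y n + f (m (n + 1)) := by
  choose g hg using hf
  let m : ℕ → M := fun n => Nat.rec 0 (fun n mn => g (mn - y n)) n
  exact ⟨m, fun n => by simp only [m, hg, add_sub_cancel]⟩

namespace LinearMap

variable {R M : Type*} [Ring R] [AddCommGroup M] [Module R M] [IsArtinian R M]

lemma exists_eq_add_apply_succ (f : Module.End R M) (y : ℕ → M) :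
    ∃ m : ℕ → M, ∀ n, m n = y n + f (m (n + 1)) := by
  have hpow (k : ℕ) (x : M) : (f ^ (k + 1)) x = f ((f ^ k) x) := by
    rw [pow_succ', Module.End.mul_apply]
  obtain ⟨K, hK⟩ := IsArtinian.monotone_stabilizes f.iterateRange
  replace hK : range (f ^ K) = range (f ^ (K + 1)) := hK (K + 1) K.le_succ
  have hfN (x : M) (hx : x ∈ range (f ^ K)) : f x ∈ range (f ^ K) := by
    obtain ⟨z, rfl⟩ := hx
    exact hK ▸ ⟨z, hpow K z⟩
  have hsurj : Function.Surjective (f.restrict hfN) := by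
    rintro ⟨_, x, rfl⟩
    obtain ⟨z, hz⟩ : (f ^ K) x ∈ range (f ^ (K + 1)) := hK ▸ ⟨x, rfl⟩
    exact ⟨⟨(f ^ K) z, z, rfl⟩, Subtype.ext ((hpow K z).symm.trans hz)⟩
  obtain ⟨w, hw⟩ := exists_eq_add_apply_succ_of_surjective hsurj
    fun n => ⟨(f ^ K) (y (n + K)), y (n + K), rfl⟩
  refine ⟨fun n => ∑ j ∈ Finset.range K, (f ^ j) (y (n + j)) + w n, fun n => ?_⟩
  have hwn : (w n : M) = (f ^ K) (y (n + K)) + f (w (n + 1)) := congrArg Subtype.val (hw n)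
  have hshift (j : ℕ) : f ((f ^ j) (y (n + 1 + j))) = (f ^ (j + 1)) (y (n + (j + 1))) := by
    rw [hpow, Nat.add_right_comm, add_assoc]
  simp only [map_add, map_sum, hshift, hwn]
  rw [← add_assoc, ← Finset.sum_range_succ (fun j => (f ^ j) (y (n + j))),
    Finset.sum_range_succ', pow_zero, add_zero, Module.End.one_apply]
  abel

end LinearMap

namespace CategoryTheory.ShortComplex

variable {C : Type*} [Category C] [Abelian C] (S : ShortComplex C)

noncomputable def twoTermComplex : ChainComplex C ℕ :=
  ChainComplex.mk' S.X₂ S.X₁ S.f fun _ => ⟨0, 0, zero_comp⟩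

lemma twoTermComplex_d_one_zero : S.twoTermComplex.d 1 0 = S.f :=
  ChainComplex.mk'_d_1_0 _ _ _ _

lemma isZero_twoTermComplex_X (n : ℕ) : IsZero (S.twoTermComplex.X (n + 2)) :=
  (isZero_zero C).of_iso (ChainComplex.mk'XIso _ _ _ _ n)

instance [Projective S.X₁] [Projective S.X₂] (n : ℕ) : Projective (S.twoTermComplex.X n) :=
  match n with
  | 0 => inferInstanceAs (Projective S.X₂)
  | 1 => inferInstanceAs (Projective S.X₁)
  | n + 2 => (S.isZero_twoTermComplex_X n).projective

lemma exactAt_twoTermComplex_succ [Mono S.f] (n : ℕ) : S.twoTermComplex.ExactAt (n + 1) := by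
  cases n with
  | zero =>
    rw [HomologicalComplex.exactAt_iff' _ 2 1 0 (by simp) (by simp)]
    refine (ShortComplex.exact_iff_mono (S.twoTermComplex.sc' 2 1 0)
      ((S.isZero_twoTermComplex_X 0).eq_of_src _ _)).2 ?_
    change Mono (S.twoTermComplex.d 1 0)
    rwa [twoTermComplex_d_one_zero]
  | succ n =>
    rw [HomologicalComplex.exactAt_iff]
    exact ShortComplex.exact_of_isZero_X₂ _ (S.isZero_twoTermComplex_X n)

variable {S}

namespace ShortExact

noncomputable def projectiveResolution (hS : S.ShortExact) [Projective S.X₁] [Projective S.X₂] :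
    ProjectiveResolution S.X₃ where
  complex := S.twoTermComplex
  π := (ChainComplex.toSingle₀Equiv _ _).symm
    ⟨S.g, by rw [twoTermComplex_d_one_zero]; exact S.zero⟩
  quasiIso := ⟨fun n => by
    cases n with
    | zero =>
      rw [ChainComplex.quasiIsoAt₀_iff, ShortComplex.quasiIso_iff_of_zeros' _ rfl rfl rfl]
      -- in degree `0` the complex is `S` itself, up to `d 1 0 = S.f`
      refine (ShortComplex.exact_and_epi_g_iff_of_iso ?_).2 ⟨hS.exact, hS.epi_g⟩
      refine ShortComplex.isoMk (Iso.refl _) (Iso.refl _) (Iso.refl _) ?_ ?_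
      all_goals dsimp only [Iso.refl_hom]; erw [Category.id_comp, Category.comp_id]
      · exact S.twoTermComplex_d_one_zero.symm
      · exact (ChainComplex.toSingle₀Equiv_symm_apply_f_zero (C := S.twoTermComplex) S.g _).symm
    | succ n =>
      have := hS.mono_f
      exact (quasiIsoAt_iff_exactAt' _ _ (ChainComplex.exactAt_succ_single_obj _ n)).2
        (S.exactAt_twoTermComplex_succ n)⟩

variable {R : Type*} [Ring R] [Linear R C] [EnoughProjectives C]
  (hS : S.ShortExact) [Projective S.X₁] [Projective S.X₂] (Y : C)
include hS

lemma isZero_ext_add_two (n : ℕ) :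
    IsZero (((Ext R C (n + 2)).obj (Opposite.op S.X₃)).obj Y) := by
  refine IsZero.of_iso ?_ (hS.projectiveResolution.isoExt (n + 2) Y)
  rw [← HomologicalComplex.exactAt_iff_isZero_homology, HomologicalComplex.exactAt_iff]
  exact ShortComplex.exact_of_isZero_X₂ _ (ModuleCat.isZero_iff_subsingleton.2
    ⟨fun a b => (S.isZero_twoTermComplex_X n).eq_of_src a b⟩)

lemma isZero_ext_one (hY : ∀ g : S.X₁ ⟶ Y, ∃ h : S.X₂ ⟶ Y, S.f ≫ h = g) :
    IsZero (((Ext R C 1).obj (Opposite.op S.X₃)).obj Y) := by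
  refine IsZero.of_iso ?_ (hS.projectiveResolution.isoExt 1 Y)
  rw [← HomologicalComplex.exactAt_iff_isZero_homology,
    HomologicalComplex.exactAt_iff' _ 0 1 2 (by simp) (by simp),
    ShortComplex.moduleCat_exact_iff]
  intro g _
  obtain ⟨h, hh⟩ := hY g
  refine ⟨h, ?_⟩
  change S.twoTermComplex.d 1 0 ≫ h = g
  rw [twoTermComplex_d_one_zero]
  exact hh

end ShortExact

end CategoryTheory.ShortComplex

namespace Polynomial

variable {R : Type*} [CommRing R] (t : R)

lemma C_mul_X_sub_one_mem_nonZeroDivisors : C t * X - 1 ∈ nonZeroDivisors R[X] :=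
  Polynomial.mem_nonZeroDivisors_iff.2 fun a ha => by
    simpa using congrArg (coeff · 0) ha

lemma C_mul_X_sub_one_mul_X_pow (n : ℕ) :
    (C t * X - 1) * X ^ n = t • X ^ (n + 1) - X ^ n := by
  rw [smul_eq_C_mul]
  ring

/-- The map `R[X] → R_t` sending `X` to `1 / t`. -/
noncomputable def toLocalizationAway : R[X] →ₗ[R] Localization.Away t :=
  ((Localization.awayEquivAdjoin t).symm.toAlgHom.comp (AdjoinRoot.mkₐ (C t * X - 1))).toLinearMap

lemma exact_mulLeft_toLocalizationAway :
    Function.Exact (LinearMap.mulLeft R (C t * X - 1)) (toLocalizationAway t) := by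
  refine Function.Exact.comp_injective (g := AdjoinRoot.mk (C t * X - 1)) _ (fun p => ?_)
    (Localization.awayEquivAdjoin t).symm.injective (map_zero _)
  rw [AdjoinRoot.mk_eq_zero, dvd_def]
  exact exists_congr fun _ => eq_comm

lemma surjective_toLocalizationAway : Function.Surjective (toLocalizationAway t) :=
  (Localization.awayEquivAdjoin t).symm.surjective.comp AdjoinRoot.mk_surjective

lemma exists_comp_mulLeft_C_mul_X_sub_one_eq {M : Type*} [AddCommGroup M] [Module R M]
    [IsArtinian R M] (g : R[X] →ₗ[R] M) :
    ∃ h : R[X] →ₗ[R] M, h ∘ₗ LinearMap.mulLeft R (C t * X - 1) = g := by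
  obtain ⟨m, hm⟩ := LinearMap.exists_eq_add_apply_succ (t • LinearMap.id : Module.End R M)
    fun n => -g (X ^ n)
  have hb (n : ℕ) : basisMonomials R n = X ^ n := by
    simp only [coe_basisMonomials, monomial_one_right_eq_X_pow]
  have hconstr (k : ℕ) : (basisMonomials R).constr R m (X ^ k) = m k := by
    rw [← hb, Module.Basis.constr_basis]
  refine ⟨(basisMonomials R).constr R m, (basisMonomials R).ext fun n => ?_⟩
  rw [hb, LinearMap.comp_apply, LinearMap.mulLeft_apply, C_mul_X_sub_one_mul_X_pow, map_sub,
    map_smul, hconstr, hconstr, hm n, LinearMap.smul_apply, LinearMap.id_apply]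
  abel

end Polynomial

namespace Localization

variable {R : Type u} [CommRing R] (t : R)

noncomputable abbrev awayShortComplex : ShortComplex (ModuleCat.{u} R) :=
  ModuleCat.shortComplexOfCompEqZero (LinearMap.mulLeft R (C t * X - 1)) (toLocalizationAway t)
    (exact_mulLeft_toLocalizationAway t).linearMap_comp_eq_zero

lemma awayShortComplex_shortExact : (awayShortComplex t).ShortExact :=
  ModuleCat.shortComplex_shortExact _ (exact_mulLeft_toLocalizationAway t)
    (fun _ _ h => (mul_cancel_left_mem_nonZeroDivisors (C_mul_X_sub_one_mem_nonZeroDivisors t)).1 h)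
    (surjective_toLocalizationAway t)

theorem isZero_ext_away_of_isArtinian (M : Type u) [AddCommGroup M] [Module R M]
    [IsArtinian R M] (i : ℕ) (hi : 1 ≤ i) :
    IsZero (((Ext R (ModuleCat.{u} R) i).obj
      (Opposite.op (ModuleCat.of R (Localization.Away t)))).obj (ModuleCat.of R M)) := by
  have hS := awayShortComplex_shortExact t
  obtain ⟨n, rfl⟩ := Nat.exists_eq_add_of_le' hi
  cases n with
  | zero =>
    refine hS.isZero_ext_one _ fun g => ?_
    obtain ⟨h, hh⟩ := exists_comp_mulLeft_C_mul_X_sub_one_eq t g.hom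
    exact ⟨ModuleCat.ofHom h, ModuleCat.hom_ext hh⟩
  | succ n => exact hS.isZero_ext_add_two _ n

end Localization

/-- Let `C` be a field, `R` a commutative `C`-algebra, and `t ∈ R`.
If `M` is an `R`-module that is finite-dimensional as a `C`-vector space, then
`Ext^i_R(R_t, M) = 0` for all `i ≥ 1`, where `R_t` is the localization of `R` away
from `t`. -/
theorem stmt2 (C : Type u) [Field C] (R : Type u) [CommRing R] [Algebra C R] (t : R)
    (M : Type u) [AddCommGroup M] [Module R M] [Module C M] [IsScalarTower C R M]
    [FiniteDimensional C M] (i : ℕ) (hi : 1 ≤ i) :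
    Subsingleton
      (((Ext R (ModuleCat.{u} R) i).obj
          (Opposite.op (ModuleCat.of R (Localization.Away t)))).obj
        (ModuleCat.of R M)) := by
  have : IsArtinian R M := isArtinian_of_tower C inferInstance
  exact ModuleCat.subsingleton_of_isZero (Localization.isZero_ext_away_of_isArtinian t M i hi)
end
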